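/- arXiv:2201.09721 — 3 statements merged into one kernel-verified Lean document; each statement's English description precedes it below -/
import Mathlib

section
/- Let V be a Hilbert space, K : V → V a bounded linear operator with I + K invertible, P the orthogonal projection onto a closed subspace W, and δ > 0. If ‖(I - P) ∘ K ∘ (I + K)⁻¹‖ ≤ 1 - δ, then I + P∘K is invertible and ‖(I + P∘K)⁻¹‖ ≤ δ⁻¹ ‖(I + K)⁻¹‖. -/
open ContinuousLinearMap

/-- The orthogonal projection of `V` onto the closed subspace `W`, as an operator `V →L[ℂ] V`. -/
noncomputable def galerkinProj {V : Type*} [NormedAddCommGroup V] [InnerProductSpace ℂ V]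
    (W : Submodule ℂ V) [CompleteSpace W] : V →L[ℂ] V :=
  W.subtypeL ∘L W.orthogonalProjectionOnto

/-!
Writing `J = (1 + K)⁻¹`, one has the factorisation `1 + P K = (1 - (1 - P) K J) (1 + K)`.
The hypothesis makes the first factor a perturbation of the identity of norm at most `1 - δ`,
so a Neumann series inverts it with inverse of norm at most `δ⁻¹`; composing with `J` gives the
claim.
-/

theorem one_add_mul_eq_of_mul_one_add_eq_one {R : Type*} [Ring R] {K J : R}
    (hJ : J * (1 + K) = 1) (P : R) :
    1 + P * K = (1 - (1 - P) * (K * J)) * (1 + K) := by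
  have hKJ : (1 - P) * (K * J) * (1 + K) = (1 - P) * K := by
    rw [mul_assoc, mul_assoc K, hJ, mul_one]
  rw [sub_mul, hKJ]
  noncomm_ring

section NormedRing

variable {R : Type*} [NormedRing R] [HasSummableGeomSeries R]

theorem Units.norm_inv_oneSub_le (h1 : ‖(1 : R)‖ ≤ 1) (t : R) (ht : ‖t‖ < 1) :
    ‖(↑(Units.oneSub t ht)⁻¹ : R)‖ ≤ (1 - ‖t‖)⁻¹ := by
  have := tsum_geometric_le_of_norm_lt_one t ht
  change ‖∑' n : ℕ, t ^ n‖ ≤ _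
  linarith

theorem exists_inverse_one_add_mul_of_norm_le (h1 : ‖(1 : R)‖ ≤ 1) {K J : R}
    (hJ1 : (1 + K) * J = 1) (hJ2 : J * (1 + K) = 1) (P : R) {δ : ℝ} (hδ : 0 < δ)
    (hE : ‖(1 - P) * (K * J)‖ ≤ 1 - δ) :
    ∃ Q : R, (1 + P * K) * Q = 1 ∧ Q * (1 + P * K) = 1 ∧ ‖Q‖ ≤ δ⁻¹ * ‖J‖ := by
  set E := (1 - P) * (K * J)
  have hE1 : ‖E‖ < 1 := by linarith
  let u : Rˣ := Units.oneSub E hE1 * ⟨1 + K, J, hJ1, hJ2⟩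
  have hu : (u : R) = 1 + P * K := (one_add_mul_eq_of_mul_one_add_eq_one hJ2 P).symm
  refine ⟨↑u⁻¹, hu ▸ u.mul_inv, hu ▸ u.inv_mul, ?_⟩
  have hS : ‖(↑(Units.oneSub E hE1)⁻¹ : R)‖ ≤ δ⁻¹ :=
    (Units.norm_inv_oneSub_le h1 E hE1).trans (inv_anti₀ hδ (by linarith))
  calc ‖(↑u⁻¹ : R)‖ = ‖J * ↑(Units.oneSub E hE1)⁻¹‖ := rfl
    _ ≤ ‖J‖ * δ⁻¹ := (norm_mul_le _ _).trans (by gcongr)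
    _ = δ⁻¹ * ‖J‖ := mul_comm _ _

end NormedRing

theorem sufficient_condition_invertibility_discrete
    {V : Type*} [NormedAddCommGroup V] [InnerProductSpace ℂ V] [CompleteSpace V]
    (K : V →L[ℂ] V) (W : Submodule ℂ V) [CompleteSpace W]
    (J : V →L[ℂ] V) (hJ1 : (1 + K) ∘L J = 1) (hJ2 : J ∘L (1 + K) = 1)
    (δ : ℝ) (hδ : 0 < δ)
    (hyp : ‖((1 : V →L[ℂ] V) - galerkinProj W) ∘L (K ∘L J)‖ ≤ 1 - δ) :
    ∃ Q : V →L[ℂ] V, (1 + galerkinProj W ∘L K) ∘L Q = 1 ∧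
      Q ∘L (1 + galerkinProj W ∘L K) = 1 ∧ ‖Q‖ ≤ δ⁻¹ * ‖J‖ :=
  exists_inverse_one_add_mul_of_norm_le norm_id_le hJ1 hJ2 (galerkinProj W) hδ hyp
end

section
/- Let V be a Hilbert space, K : V → V bounded with I + K invertible, P the orthogonal projection onto a closed subspace W, and δ > 0. If ‖(I - P) ∘ K ∘ (I + K)⁻¹‖ ≤ 1 - δ, then for every f ∈ V there exists a unique v_N ∈ W with (I + P∘K) v_N = P f, and, setting v := (I+K)⁻¹ f, we have ‖v - v_N‖ ≤ δ⁻¹ ‖(I+K)⁻¹‖ · inf_{w ∈ W} ‖v - w‖. -/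
/-!
Writing `x = (1 - P) K (1 + K)⁻¹`, the Galerkin operator factors as
`1 + P K = (1 - x) (1 + K)`. Since `‖x‖ ≤ 1 - δ`, the first factor is invertible by the Neumann
series and satisfies `δ ‖y‖ ≤ ‖(1 - x) y‖`, so `1 + P K` is invertible with
`δ ‖y‖ ≤ ‖(1 + K)⁻¹‖ ‖(1 + P K) y‖`. Applied to `y = v - v_N`, for which
`(1 + P K) (v - v_N) = (1 - P) v`, this is the estimate, as `‖(1 - P) v‖` is the
best-approximation error.
-/

open ContinuousLinearMap

theorem one_add_mul_eq_one_sub_mul_mul_one_add {R : Type*} [Ring R] {p k j : R}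
    (hj : j * (1 + k) = 1) : 1 + p * k = (1 - (1 - p) * (k * j)) * (1 + k) := by
  rw [sub_mul, one_mul, mul_assoc, mul_assoc, hj, mul_one]
  noncomm_ring

theorem ContinuousLinearMap.mul_norm_le_norm_sub_apply {𝕜 E : Type*} [NontriviallyNormedField 𝕜]
    [SeminormedAddCommGroup E] [NormedSpace 𝕜 E] {T : E →L[𝕜] E} {δ : ℝ} (hT : ‖T‖ ≤ 1 - δ)
    (y : E) : δ * ‖y‖ ≤ ‖y - T y‖ := by
  have hTy : ‖T y‖ ≤ (1 - δ) * ‖y‖ :=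
    (T.le_opNorm y).trans (mul_le_mul_of_nonneg_right hT (norm_nonneg y))
  linarith [norm_sub_norm_le y (T y)]

theorem ContinuousLinearMap.mul_norm_le_opNorm_mul_norm_one_sub_comp_apply {𝕜 E : Type*}
    [NontriviallyNormedField 𝕜] [SeminormedAddCommGroup E] [NormedSpace 𝕜 E]
    {T B J : E →L[𝕜] E} {δ : ℝ} (hδ : 0 ≤ δ) (hT : ‖T‖ ≤ 1 - δ) (hJ : J ∘L B = 1) (y : E) :
    δ * ‖y‖ ≤ ‖J‖ * ‖((1 - T) ∘L B) y‖ := by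
  have hy : J (B y) = y := by simpa using congr($hJ y)
  calc δ * ‖y‖ = δ * ‖J (B y)‖ := by rw [hy]
    _ ≤ δ * (‖J‖ * ‖B y‖) := by gcongr; exact J.le_opNorm _
    _ = ‖J‖ * (δ * ‖B y‖) := by ring
    _ ≤ ‖J‖ * ‖((1 - T) ∘L B) y‖ := by gcongr; exact mul_norm_le_norm_sub_apply hT _

section Galerkin

variable {V : Type*} [NormedAddCommGroup V] [InnerProductSpace ℂ V] (W : Submodule ℂ V)
  [CompleteSpace W]

theorem galerkinProj_apply_mem (v : V) : galerkinProj W v ∈ W :=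
  (W.orthogonalProjectionOnto v).2

theorem norm_sub_galerkinProj_eq_infDist (v : V) :
    ‖v - galerkinProj W v‖ = Metric.infDist v W := by
  simp only [Metric.infDist_eq_iInf, dist_eq_norm]
  exact W.starProjection_minimal v

theorem mem_of_one_add_galerkinProj_comp_apply_eq {K : V →L[ℂ] V} {v b : V}
    (h : (1 + galerkinProj W ∘L K) v = galerkinProj W b) : v ∈ W := by
  have hv : v = galerkinProj W b - galerkinProj W (K v) := by
    rw [← h]; simp
  rw [hv]
  exact W.sub_mem (galerkinProj_apply_mem W b) (galerkinProj_apply_mem W _)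

end Galerkin

theorem ContinuousLinearMap.one_add_comp_apply_sub {R E : Type*} [Ring R]
    [AddCommGroup E] [TopologicalSpace E] [Module R E] [IsTopologicalAddGroup E]
    (P K : E →L[R] E) {v vN : E} (h : (1 + P ∘L K) vN = P ((1 + K) v)) :
    (1 + P ∘L K) (v - vN) = v - P v := by
  rw [map_sub, h]
  simp only [add_apply, comp_apply, map_add]
  abel

theorem galerkin_quasi_optimality
    {V : Type*} [NormedAddCommGroup V] [InnerProductSpace ℂ V] [CompleteSpace V]
    (K : V →L[ℂ] V) (W : Submodule ℂ V) [CompleteSpace W]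
    (J : V →L[ℂ] V) (hJ1 : (1 + K) ∘L J = 1) (hJ2 : J ∘L (1 + K) = 1)
    (δ : ℝ) (hδ : 0 < δ)
    (hyp : ‖((1 : V →L[ℂ] V) - galerkinProj W) ∘L (K ∘L J)‖ ≤ 1 - δ)
    (f : V) :
    ∃ vN : V, vN ∈ W ∧ (1 + galerkinProj W ∘L K) vN = galerkinProj W f ∧
      (∀ w ∈ W, (1 + galerkinProj W ∘L K) w = galerkinProj W f → w = vN) ∧
      ‖J f - vN‖ ≤ δ⁻¹ * ‖J‖ * Metric.infDist (J f) (W : Set V) := by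
  set P := galerkinProj W
  set T := (1 - P) ∘L (K ∘L J)
  have hT : ‖T‖ < 1 := hyp.trans_lt (by linarith)
  let U : (V →L[ℂ] V)ˣ := Units.oneSub T hT * ⟨1 + K, J, hJ1, hJ2⟩
  have hU : (U : V →L[ℂ] V) = 1 + P ∘L K := (one_add_mul_eq_one_sub_mul_mul_one_add hJ2).symm
  have hbij : Function.Bijective (1 + P ∘L K : V →L[ℂ] V) :=
    hU ▸ (ContinuousLinearEquiv.unitsEquiv ℂ V U).bijective
  have hstab (y : V) : δ * ‖y‖ ≤ ‖J‖ * ‖(1 + P ∘L K) y‖ :=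
    hU ▸ mul_norm_le_opNorm_mul_norm_one_sub_comp_apply hδ.le hyp hJ2 y
  have hf : (1 + K) (J f) = f := by simpa using congr($hJ1 f)
  obtain ⟨vN, hvN⟩ := hbij.2 (P f)
  refine ⟨vN, mem_of_one_add_galerkinProj_comp_apply_eq W hvN, hvN,
    fun w _ hw => hbij.1 (hw.trans hvN.symm), ?_⟩
  have herr : (1 + P ∘L K) (J f - vN) = J f - P (J f) :=
    one_add_comp_apply_sub P K (by rw [hvN, hf])
  rw [← norm_sub_galerkinProj_eq_infDist, ← herr, mul_assoc, le_inv_mul_iff₀ hδ]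
  exact hstab _
end

section
/- Let k ≥ 1, let (λ_m)_{m∈ℤ} be complex numbers with |λ_m| ≥ 1 and |λ_m − 1| ≤ C₀ k/|m| for m² ≥ 2k², and let χ : ℝ → [0,1] with χ ≡ 1 on [-3/2,3/2] and supp χ ⊆ [-2,2]. Then the diagonal operator on ℓ²(ℤ) with symbol (λ_m − 1)/λ_m has ℓ² → h¹ operator norm at most C k for some constant C depending only on C₀. -/
open ContinuousLinearMap
open scoped InnerProductSpace

theorem combined_field_multiplier_L2_to_h1_bound
    (C₀ : ℝ) (hC₀ : 0 < C₀) :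
    ∃ C > 0, ∀ k : ℝ, 1 ≤ k → ∀ lam : ℤ → ℂ,
      (∀ m : ℤ, 1 ≤ ‖lam m‖) →
      (∀ m : ℤ, 2 * k^2 ≤ (m : ℝ)^2 → ‖lam m - 1‖ ≤ C₀ * k / |(m : ℝ)|) →
      ∀ χ : ℝ → ℝ, (∀ x, 0 ≤ χ x ∧ χ x ≤ 1) → (∀ x : ℝ, |x| ≤ 3/2 → χ x = 1) →
        (∀ x : ℝ, 2 ≤ |x| → χ x = 0) →
      ∀ (H : Type) [NormedAddCommGroup H] [InnerProductSpace ℂ H] [CompleteSpace H],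
      ∀ (e : HilbertBasis ℤ ℂ H) (T : H →L[ℂ] H),
        (∀ m : ℤ, T (e m) = ((lam m - 1) / lam m) • e m) →
      ∀ v : H, ∑' m : ℤ, (1 + (m : ℝ)^2) * ‖⟪e m, T v⟫_ℂ‖^2 ≤ (C * k)^2 * ‖v‖^2 := by
  set B : ℝ := max 12 (2 * C₀ ^ 2) with hB
  have hB12 : (12 : ℝ) ≤ B := le_max_left _ _
  have hBC : 2 * C₀ ^ 2 ≤ B := le_max_right _ _
  have hBpos : 0 < B := lt_of_lt_of_le (by norm_num) hB12
  refine ⟨Real.sqrt B, Real.sqrt_pos.mpr hBpos, ?_⟩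
  intro k hk lam hlam1 hlam2 χ _ _ _ H _ _ _ e T hT v
  have hk0 : 0 < k := lt_of_lt_of_le one_pos hk
  have hCk : (Real.sqrt B * k) ^ 2 = B * k ^ 2 := by
    rw [mul_pow, Real.sq_sqrt hBpos.le]
  -- key diagonal identity
  have key : ∀ m : ℤ, ⟪e m, T v⟫_ℂ = ((lam m - 1) / lam m) * ⟪e m, v⟫_ℂ := by
    intro m
    have h1 : HasSum (fun i => e.repr v i • T (e i)) (T v) := by
      simpa using (e.hasSum_repr v).mapL T
    have h2 : HasSum (fun i => (e.repr v i : ℂ) * ⟪e m, T (e i)⟫_ℂ) ⟪e m, T v⟫_ℂ := by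
      simpa using h1.mapL (innerSL ℂ (e m))
    have horth := orthonormal_iff_ite.mp e.orthonormal
    have h3 : (fun i : ℤ => (e.repr v i : ℂ) * ⟪e m, T (e i)⟫_ℂ)
        = fun i : ℤ => if i = m then ((lam m - 1) / lam m) * ⟪e m, v⟫_ℂ else 0 := by
      funext i
      rw [hT i, inner_smul_right, horth m i]
      by_cases h : i = m
      · subst h
        simp [e.repr_apply_apply, mul_comm]
      · simp [Ne.symm h, h]
    rw [h3] at h2
    have h4 : HasSum (fun i : ℤ => if i = m then ((lam m - 1) / lam m) * ⟪e m, v⟫_ℂ else 0)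
        (((lam m - 1) / lam m) * ⟪e m, v⟫_ℂ) := hasSum_ite_eq m _
    exact h2.unique h4
  -- pointwise multiplier bound
  have hmul : ∀ m : ℤ, (1 + (m : ℝ) ^ 2) * ‖(lam m - 1) / lam m‖ ^ 2 ≤ B * k ^ 2 := by
    intro m
    have hlm : lam m ≠ 0 := by
      intro h
      have := hlam1 m
      rw [h] at this; norm_num at this
    have hnorm : ‖(lam m - 1) / lam m‖ = ‖lam m - 1‖ / ‖lam m‖ := norm_div _ _
    by_cases hcase : 2 * k ^ 2 ≤ (m : ℝ) ^ 2
    · -- high frequency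
      have hm0 : (1 : ℝ) ≤ (m : ℝ) ^ 2 := by
        nlinarith [sq_nonneg k]
      have hmne : (m : ℝ) ≠ 0 := by
        intro h; rw [h] at hm0; norm_num at hm0
      have habs : 0 < |(m : ℝ)| := abs_pos.mpr hmne
      have h1 : ‖(lam m - 1) / lam m‖ ≤ C₀ * k / |(m : ℝ)| := by
        rw [hnorm]
        calc ‖lam m - 1‖ / ‖lam m‖ ≤ ‖lam m - 1‖ / 1 :=
              div_le_div_of_nonneg_left (norm_nonneg _) one_pos (hlam1 m) |>.trans_eq rfl
          _ = ‖lam m - 1‖ := div_one _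
          _ ≤ C₀ * k / |(m : ℝ)| := hlam2 m hcase
      have h2 : ‖(lam m - 1) / lam m‖ ^ 2 ≤ (C₀ * k) ^ 2 / (m : ℝ) ^ 2 := by
        have := pow_le_pow_left₀ (norm_nonneg _) h1 2
        calc ‖(lam m - 1) / lam m‖ ^ 2 ≤ (C₀ * k / |(m : ℝ)|) ^ 2 := this
          _ = (C₀ * k) ^ 2 / (m : ℝ) ^ 2 := by rw [div_pow, sq_abs]
      calc (1 + (m : ℝ) ^ 2) * ‖(lam m - 1) / lam m‖ ^ 2
          ≤ (1 + (m : ℝ) ^ 2) * ((C₀ * k) ^ 2 / (m : ℝ) ^ 2) := by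
            apply mul_le_mul_of_nonneg_left h2; nlinarith
        _ = ((1 + (m : ℝ) ^ 2) / (m : ℝ) ^ 2) * (C₀ * k) ^ 2 := by ring
        _ ≤ 2 * (C₀ * k) ^ 2 := by
            apply mul_le_mul_of_nonneg_right _ (sq_nonneg _)
            rw [div_le_iff₀ (by positivity)]
            nlinarith
        _ = (2 * C₀ ^ 2) * k ^ 2 := by ring
        _ ≤ B * k ^ 2 := by nlinarith [sq_nonneg k, hk0]
    · -- low frequency
      push_neg at hcase
      have h1 : ‖(lam m - 1) / lam m‖ ≤ 2 := by
        rw [div_eq_mul_inv, norm_mul, norm_inv]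
        have hinv : ‖lam m‖⁻¹ ≤ 1 := by
          rw [inv_le_one_iff₀]; right; exact hlam1 m
        have h2 : ‖lam m - 1‖ ≤ ‖lam m‖ + 1 := by
          calc ‖lam m - 1‖ ≤ ‖lam m‖ + ‖(1 : ℂ)‖ := norm_sub_le _ _
            _ = ‖lam m‖ + 1 := by simp
        have hpos : (0:ℝ) < ‖lam m‖ := lt_of_lt_of_le one_pos (hlam1 m)
        calc ‖lam m - 1‖ * ‖lam m‖⁻¹ ≤ (‖lam m‖ + 1) * ‖lam m‖⁻¹ := by
              apply mul_le_mul_of_nonneg_right h2 (by positivity)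
          _ = 1 + ‖lam m‖⁻¹ := by rw [add_mul, mul_inv_cancel₀ hpos.ne', one_mul]
          _ ≤ 2 := by linarith
      have hmsq : (m : ℝ) ^ 2 < 2 * k ^ 2 := hcase
      calc (1 + (m : ℝ) ^ 2) * ‖(lam m - 1) / lam m‖ ^ 2
          ≤ (1 + 2 * k ^ 2) * 4 := by
            apply mul_le_mul (by nlinarith) _ (sq_nonneg _) (by nlinarith)
            nlinarith [norm_nonneg ((lam m - 1) / lam m)]
        _ ≤ 12 * k ^ 2 := by nlinarith
        _ ≤ B * k ^ 2 := by nlinarith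
  -- termwise bound and summation
  have hterm : ∀ m : ℤ, (1 + (m : ℝ) ^ 2) * ‖⟪e m, T v⟫_ℂ‖ ^ 2
      ≤ B * k ^ 2 * ‖⟪e m, v⟫_ℂ‖ ^ 2 := by
    intro m
    rw [key m, norm_mul, mul_pow]
    calc (1 + (m : ℝ) ^ 2) * (‖(lam m - 1) / lam m‖ ^ 2 * ‖⟪e m, v⟫_ℂ‖ ^ 2)
        = ((1 + (m : ℝ) ^ 2) * ‖(lam m - 1) / lam m‖ ^ 2) * ‖⟪e m, v⟫_ℂ‖ ^ 2 := by ring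
      _ ≤ B * k ^ 2 * ‖⟪e m, v⟫_ℂ‖ ^ 2 :=
          mul_le_mul_of_nonneg_right (hmul m) (sq_nonneg _)
  have hsum2 : Summable fun m : ℤ => ‖⟪e m, v⟫_ℂ‖ ^ 2 :=
    e.orthonormal.inner_products_summable v
  have hsumR : Summable fun m : ℤ => B * k ^ 2 * ‖⟪e m, v⟫_ℂ‖ ^ 2 := hsum2.mul_left _
  have hsumL : Summable fun m : ℤ => (1 + (m : ℝ) ^ 2) * ‖⟪e m, T v⟫_ℂ‖ ^ 2 :=
    Summable.of_nonneg_of_le (fun m => by positivity) hterm hsumR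
  calc ∑' m : ℤ, (1 + (m : ℝ) ^ 2) * ‖⟪e m, T v⟫_ℂ‖ ^ 2
      ≤ ∑' m : ℤ, B * k ^ 2 * ‖⟪e m, v⟫_ℂ‖ ^ 2 := Summable.tsum_le_tsum hterm hsumL hsumR
    _ = B * k ^ 2 * ∑' m : ℤ, ‖⟪e m, v⟫_ℂ‖ ^ 2 := tsum_mul_left
    _ ≤ B * k ^ 2 * ‖v‖ ^ 2 := by
        apply mul_le_mul_of_nonneg_left (e.orthonormal.tsum_inner_products_le v)
        positivity
    _ = (Real.sqrt B * k) ^ 2 * ‖v‖ ^ 2 := by rw [hCk]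
end
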